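/- Let H be a simply connected combinatorial strata structure endowed with a datum (N, {P_J}) of nodal strata, and let B be a nodal separating block of N in H. Then for every i ∈ I and every {j} ∈ A_B(i), there is a 1-path γ in H joining {i} and {j} such that κ_B(γ) = 0. -/

import Mathlib

/-- A combinatorial strata structure with minimal set of indices the (finite) type `I`:
an open subset of `𝒫(I)` (i.e. a family closed under taking subsets) containing all
singletons. -/
def IsCSS {I : Type*} (H : Set (Finset I)) : Prop :=
  (∀ J ∈ H, ∀ J' : Finset I, J' ⊆ J → J' ∈ H) ∧ ∀ i : I, ({i} : Finset I) ∈ H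

/-- `level H k` is `H(k)`, the set of strata of `H` with exactly `k` elements. -/
def level {I : Type*} (H : Set (Finset I)) (k : ℕ) : Set (Finset I) :=
  {J ∈ H | J.card = k}

/-- A `k`-path in `H`: a nonempty sequence of strata of `H(k)` such that the union of
any two consecutive entries lies in `H(k+1)`. -/
def IsKPath {I : Type*} [DecidableEq I] (H : Set (Finset I)) (k : ℕ)
    (γ : List (Finset I)) : Prop :=
  γ ≠ [] ∧ (∀ J ∈ γ, J ∈ level H k) ∧
    γ.Chain' fun J J' => (J ∪ J') ∈ level H (k + 1)

/-- The path `γ` joins `J` and `J'`. -/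
def Joins {I : Type*} (γ : List (Finset I)) (J J' : Finset I) : Prop :=
  γ.head? = some J ∧ γ.getLast? = some J'

/-- The subsupport of a path: the sequence of unions of consecutive entries. -/
def subSup {I : Type*} [DecidableEq I] (γ : List (Finset I)) : List (Finset I) :=
  List.zipWith (· ∪ ·) γ γ.tail

open Classical in
/-- `kappa B γ`: the number of entries of the subsupport of `γ` that belong to `B`. -/
noncomputable def kappa {I : Type*} [DecidableEq I] (B : Set (Finset I))
    (γ : List (Finset I)) : ℕ :=
  (subSup γ).countP fun J => decide (J ∈ B)

/-- `A` is `k`-connected in `H`: any two elements of `A` are joined by a `k`-path in `H`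
with support contained in `A`. -/
def KConnectedIn {I : Type*} [DecidableEq I] (H : Set (Finset I)) (k : ℕ)
    (A : Set (Finset I)) : Prop :=
  ∀ J ∈ A, ∀ J' ∈ A, ∃ γ : List (Finset I),
    IsKPath H k γ ∧ Joins γ J J' ∧ ∀ K ∈ γ, K ∈ A

/-- `C` is a `k`-connected component of `A` in `H`: a maximal nonempty `k`-connected
subset of `A`. -/
def IsKComponent {I : Type*} [DecidableEq I] (H : Set (Finset I)) (k : ℕ)
    (A C : Set (Finset I)) : Prop :=
  C.Nonempty ∧ C ⊆ A ∧ KConnectedIn H k C ∧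
    ∀ C' : Set (Finset I), C ⊆ C' → C' ⊆ A → KConnectedIn H k C' → C' = C

/-- `H` is 1-connected: `H(1)` is 1-connected in `H`. -/
def OneConnected {I : Type*} [DecidableEq I] (H : Set (Finset I)) : Prop :=
  KConnectedIn H 1 (level H 1)

/-- One-sided version of an elementary homotopic pair of 1-paths in `H`. -/
def ElemPairCore {I : Type*} [DecidableEq I] (H : Set (Finset I))
    (ε ε' : List (Finset I)) : Prop :=
  ε = ε'
  ∨ (∃ i₁ i₂ : I, ε = [{i₁}, {i₂}, {i₁}] ∧ ε' = [{i₁}])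
  ∨ (∃ i₁ i₂ i₃ : I, ε = [{i₁}, {i₂}] ∧ ε' = [{i₁}, {i₃}, {i₂}] ∧
      IsKPath H 2 [{i₁, i₃}, {i₃, i₂}])

/-- An elementary homotopic pair of 1-paths in `H` (up to swapping the two paths). -/
def ElemPair {I : Type*} [DecidableEq I] (H : Set (Finset I))
    (ε ε' : List (Finset I)) : Prop :=
  ElemPairCore H ε ε' ∨ ElemPairCore H ε' ε

/-- `γ₂` is obtained from `γ₁` by an elementary homotopy. -/
def ElemHomotopy {I : Type*} [DecidableEq I] (H : Set (Finset I))
    (γ₁ γ₂ : List (Finset I)) : Prop :=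
  ∃ δ ε₁ ε₂ ρ : List (Finset I),
    ElemPair H ε₁ ε₂ ∧ γ₁ = δ ++ ε₁ ++ ρ ∧ γ₂ = δ ++ ε₂ ++ ρ

/-- `γ` and `γ'` are homotopically equivalent in `H` with support in `A`: they are linked
by a finite chain of elementary homotopies in which every intermediate 1-path has
support in `A`. -/
def HomotopicIn {I : Type*} [DecidableEq I] (H A : Set (Finset I))
    (γ γ' : List (Finset I)) : Prop :=
  (IsKPath H 1 γ ∧ ∀ J ∈ γ, J ∈ A) ∧
    Relation.ReflTransGen
      (fun g₁ g₂ => ElemHomotopy H g₁ g₂ ∧ IsKPath H 1 g₂ ∧ ∀ J ∈ g₂, J ∈ A) γ γ'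

/-- A 1-connected subset `A ⊆ H(1)` is simply connected in `H`: any two 1-paths in `H`
with support in `A` joining the same strata are homotopically equivalent in `H` with
support in `A`. -/
def SimplyConnectedIn {I : Type*} [DecidableEq I] (H A : Set (Finset I)) : Prop :=
  KConnectedIn H 1 A ∧
    ∀ γ γ' : List (Finset I), IsKPath H 1 γ → IsKPath H 1 γ' →
      (∀ J ∈ γ, J ∈ A) → (∀ J ∈ γ', J ∈ A) →
      γ.head? = γ'.head? → γ.getLast? = γ'.getLast? →
      HomotopicIn H A γ γ'

/-- `H` is simply connected: `H(1)` is simply connected in `H`. -/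
def SimplyConnected {I : Type*} [DecidableEq I] (H : Set (Finset I)) : Prop :=
  SimplyConnectedIn H (level H 1)

/-- The closure of `A` in `H`: the strata of `H` containing some element of `A`. -/
def Cl {I : Type*} (H A : Set (Finset I)) : Set (Finset I) :=
  {J' ∈ H | ∃ J ∈ A, J ⊆ J'}

/-- A datum of nodal strata `(N, {P_J})` in `H`: a subset `N ⊆ H` together with, for each
`J ∈ N`, a partition `P_J = {J₊, J₋}` of `J` into two nonempty parts, such that for every
`J ∈ N` and `J' ⊆ J` one has `J' ∈ N` iff `J' ∩ J₊ ≠ ∅ ≠ J' ∩ J₋`, and in that case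
`P_{J'} = {J' ∩ J₊, J' ∩ J₋}`. -/
structure NodalDatum {I : Type*} [DecidableEq I] (H : Set (Finset I)) : Type _ where
  N : Set (Finset I)
  N_sub : N ⊆ H
  plus : Finset I → Finset I
  minus : Finset I → Finset I
  plus_nonempty : ∀ J ∈ N, (plus J).Nonempty
  minus_nonempty : ∀ J ∈ N, (minus J).Nonempty
  union_eq : ∀ J ∈ N, plus J ∪ minus J = J
  disj : ∀ J ∈ N, Disjoint (plus J) (minus J)
  mem_iff : ∀ J ∈ N, ∀ J' : Finset I, J' ⊆ J →
    (J' ∈ N ↔ (J' ∩ plus J).Nonempty ∧ (J' ∩ minus J).Nonempty)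
  part_eq : ∀ J ∈ N, ∀ J' : Finset I, J' ⊆ J → J' ∈ N →
    ({plus J', minus J'} : Set (Finset I)) = {J' ∩ plus J, J' ∩ minus J}

/-- `N*`: the set of uninterrupted nodal strata, i.e. `J ∈ N` with `Cl_H({J}) ⊆ N`. -/
def Nstar {I : Type*} [DecidableEq I] {H : Set (Finset I)} (D : NodalDatum H) :
    Set (Finset I) :=
  {J ∈ D.N | ∀ J' ∈ H, J ⊆ J' → J' ∈ D.N}

/-- A nodal block of `N` in `H`: a 2-connected component of `N(2) = N ∩ H(2)` in `H`. -/
def IsNodalBlock {I : Type*} [DecidableEq I] {H : Set (Finset I)} (D : NodalDatum H)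
    (B : Set (Finset I)) : Prop :=
  IsKComponent H 2 (D.N ∩ level H 2) B

/-- A nodal separating block: a nodal block contained in `N*`. -/
def IsSepBlock {I : Type*} [DecidableEq I] {H : Set (Finset I)} (D : NodalDatum H)
    (B : Set (Finset I)) : Prop :=
  IsNodalBlock D B ∧ B ⊆ Nstar D

/-- The separator set: the union of all nodal separating blocks. -/
def SepSet {I : Type*} [DecidableEq I] {H : Set (Finset I)} (D : NodalDatum H) :
    Set (Finset I) :=
  ⋃₀ {B | IsSepBlock D B}

/-- `A_B(i)`: the set of `{j} ∈ H(1)` joined to `{i}` by a 1-path `γ` in `H` with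
`κ_B(γ)` even. -/
def ABset {I : Type*} [DecidableEq I] (H B : Set (Finset I)) (i : I) : Set (Finset I) :=
  {J ∈ level H 1 | ∃ γ : List (Finset I),
    IsKPath H 1 γ ∧ Joins γ {i} J ∧ Even (kappa B γ)}

/-- `B_B(i)`: the set of `{j} ∈ H(1)` joined to `{i}` by a 1-path `γ` in `H` with
`κ_B(γ)` odd. -/
def BBset {I : Type*} [DecidableEq I] (H B : Set (Finset I)) (i : I) : Set (Finset I) :=
  {J ∈ level H 1 | ∃ γ : List (Finset I),
    IsKPath H 1 γ ∧ Joins γ {i} J ∧ Odd (kappa B γ)}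

/-!
Modulo 2, `κ_B` is a homotopy invariant: in a 3-stratum `T` containing an edge of `B`, the
edges of `T` lying in `B` are, by maximality of the block, exactly those crossing the
partition `P_T`, and a triangle has an even number of crossing edges. As `H` is simply
connected, all 1-paths from `{i}` to `{j}` thus have `κ_B` even. Given one with `κ_B ≠ 0`,
follow it up to its first edge in `B`, then walk along a 2-path inside `B` to its last edge
in `B`, always moving to a vertex on the same side of the partition of the current
3-stratum (which crosses no nodal edge), and finish along the path. The result has
`κ_B ≤ 1`, hence `κ_B = 0`.
-/

lemma Finset.pair_subset {α : Type*} [DecidableEq α] {s : Finset α} {a b : α} (ha : a ∈ s)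
    (hb : b ∈ s) : ({a, b} : Finset α) ⊆ s :=
  Finset.insert_subset ha (Finset.singleton_subset_iff.mpr hb)

section Joins

variable {I : Type*}

lemma joins_singleton {x X Y : Finset I} : Joins [x] X Y ↔ x = X ∧ x = Y := by
  simp [Joins]

lemma joins_cons_cons {x y X Y : Finset I} {l : List (Finset I)} :
    Joins (x :: y :: l) X Y ↔ x = X ∧ Joins (y :: l) y Y := by
  simp [Joins, List.getLast?_cons_cons]

end Joins

section

open Classical

variable {I : Type*} [DecidableEq I] {H : Set (Finset I)}

section Paths

variable {k : ℕ} {B : Set (Finset I)}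

lemma isKPath_singleton {x : Finset I} : IsKPath H k [x] ↔ x ∈ level H k :=
  ⟨fun h => h.2.1 x List.mem_cons_self,
    fun h => ⟨List.cons_ne_nil _ _, by simpa using h, List.isChain_singleton x⟩⟩

lemma isKPath_cons_cons {x y : Finset I} {l : List (Finset I)} :
    IsKPath H k (x :: y :: l) ↔
      x ∈ level H k ∧ x ∪ y ∈ level H (k + 1) ∧ IsKPath H k (y :: l) := by
  constructor
  · rintro ⟨-, hmem, hch⟩
    obtain ⟨hxy, hch⟩ := List.isChain_cons_cons.mp hch
    exact ⟨hmem x List.mem_cons_self, hxy, List.cons_ne_nil _ _,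
      fun J hJ => hmem J (List.mem_cons_of_mem x hJ), hch⟩
  · rintro ⟨hx, hxy, -, hmem, hch⟩
    exact ⟨List.cons_ne_nil _ _, List.forall_mem_cons.mpr ⟨hx, hmem⟩,
      List.isChain_cons_cons.mpr ⟨hxy, hch⟩⟩

lemma kappa_singleton (x : Finset I) : kappa B [x] = 0 := rfl

lemma kappa_cons_cons (x y : Finset I) (l : List (Finset I)) :
    kappa B (x :: y :: l) = (if x ∪ y ∈ B then 1 else 0) + kappa B (y :: l) := by
  by_cases h : x ∪ y ∈ B <;> simp [kappa, subSup, h, Nat.add_comm]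

lemma kappa_append_cons (l₁ l₂ : List (Finset I)) (a : Finset I) :
    kappa B (l₁ ++ a :: l₂) = kappa B (l₁ ++ [a]) + kappa B (a :: l₂) := by
  induction l₁ with
  | nil => simp [kappa_singleton]
  | cons x l₁ ih =>
    cases l₁ with
    | nil => simp [kappa_cons_cons, kappa_singleton]
    | cons y l₁ =>
      simp only [List.cons_append] at ih ⊢
      rw [kappa_cons_cons, ih, kappa_cons_cons, Nat.add_assoc]

lemma exists_isKPath_concat {p q : List (Finset I)} {X Y Z : Finset I}
    (hp : IsKPath H k p) (hpj : Joins p X Y) (hq : IsKPath H k q) (hqj : Joins q Y Z) :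
    ∃ r, IsKPath H k r ∧ Joins r X Z ∧ (∀ K ∈ r, K ∈ p ∨ K ∈ q) ∧
      kappa B r = kappa B p + kappa B q := by
  induction p generalizing X with
  | nil => exact absurd rfl hp.1
  | cons x l ih =>
    cases l with
    | nil =>
      obtain ⟨rfl, rfl⟩ := joins_singleton.mp hpj
      exact ⟨q, hq, hqj, fun K hK => Or.inr hK, by rw [kappa_singleton, Nat.zero_add]⟩
    | cons y l =>
      obtain ⟨hx, hxy, hl⟩ := isKPath_cons_cons.mp hp
      obtain ⟨rfl, hlj⟩ := joins_cons_cons.mp hpj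
      obtain ⟨r, hr, hrj, hrsup, hrκ⟩ := ih hl hlj
      obtain ⟨r, rfl⟩ : ∃ r', r = y :: r' := by
        cases r with
        | nil => exact absurd rfl hr.1
        | cons z r' => exact ⟨r', by rw [Option.some.inj hrj.1]⟩
      refine ⟨x :: y :: r, isKPath_cons_cons.mpr ⟨hx, hxy, hr⟩,
        joins_cons_cons.mpr ⟨rfl, hrj⟩, ?_, ?_⟩
      · intro K hK
        rcases List.mem_cons.mp hK with rfl | hK
        · exact Or.inl List.mem_cons_self
        · exact (hrsup K hK).imp (List.mem_cons_of_mem x) id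
      · rw [kappa_cons_cons, kappa_cons_cons, hrκ, Nat.add_assoc]

end Paths

lemma IsKComponent.mem_of_isKPath_pair {k : ℕ} {A C : Set (Finset I)} {e e' : Finset I}
    (hC : IsKComponent H k A C) (he : e ∈ C) (he' : e' ∈ A) (hee' : IsKPath H k [e, e']) :
    e' ∈ C := by
  obtain ⟨-, hCA, hconn, hmax⟩ := hC
  obtain ⟨hek, hun, he'k⟩ := isKPath_cons_cons.mp hee'
  have he'e : IsKPath H k [e', e] :=
    isKPath_cons_cons.mpr ⟨isKPath_singleton.mp he'k, Finset.union_comm e e' ▸ hun,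
      isKPath_singleton.mpr hek⟩
  have via_e : ∀ J ∈ insert e' C, ∃ p q : List (Finset I),
      IsKPath H k p ∧ Joins p J e ∧ (∀ K ∈ p, K ∈ insert e' C) ∧
      IsKPath H k q ∧ Joins q e J ∧ (∀ K ∈ q, K ∈ insert e' C) := by
    rintro J (rfl | hJ)
    · refine ⟨[J, e], [e, J], he'e, ⟨rfl, rfl⟩, ?_, hee', ⟨rfl, rfl⟩, ?_⟩ <;>
        simp [he]
    · obtain ⟨p, hp, hpj, hpC⟩ := hconn J hJ e he
      obtain ⟨q, hq, hqj, hqC⟩ := hconn e he J hJ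
      exact ⟨p, q, hp, hpj, fun K hK => Or.inr (hpC K hK), hq, hqj,
        fun K hK => Or.inr (hqC K hK)⟩
  have hconn' : KConnectedIn H k (insert e' C) := by
    intro J hJ J' hJ'
    obtain ⟨p, -, hp, hpj, hpC, -⟩ := via_e J hJ
    obtain ⟨-, q, -, -, -, hq, hqj, hqC⟩ := via_e J' hJ'
    obtain ⟨r, hr, hrj, hrsup, -⟩ := exists_isKPath_concat (B := ∅) hp hpj hq hqj
    exact ⟨r, hr, hrj, fun K hK => (hrsup K hK).elim (hpC K) (hqC K)⟩
  rw [← hmax _ (Set.subset_insert e' C) (Set.insert_subset he' hCA) hconn']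
  exact Set.mem_insert e' C

lemma NodalDatum.mem_minus_iff (D : NodalDatum H) {J : Finset I} (hJ : J ∈ D.N) {w : I}
    (hw : w ∈ J) : w ∈ D.minus J ↔ w ∉ D.plus J := by
  rw [← D.union_eq J hJ, Finset.mem_union] at hw
  have := Finset.disjoint_left.mp (D.disj J hJ)
  tauto

lemma NodalDatum.pair_mem_iff (D : NodalDatum H) {J : Finset I} (hJ : J ∈ D.N) {u v : I}
    (hu : u ∈ J) (hv : v ∈ J) :
    ({u, v} : Finset I) ∈ D.N ↔ (u ∈ D.plus J ↔ v ∉ D.plus J) := by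
  rw [D.mem_iff J hJ _ (Finset.pair_subset hu hv)]
  simp only [Finset.Nonempty, Finset.mem_inter, Finset.mem_insert, Finset.mem_singleton,
    exists_eq_or_imp, exists_eq_left, D.mem_minus_iff hJ hu, D.mem_minus_iff hJ hv]
  tauto

namespace IsSepBlock

variable {D : NodalDatum H} {B : Set (Finset I)}

lemma mem_N_of_subset (hB : IsSepBlock D B) {e T : Finset I} (he : e ∈ B) (hT : T ∈ H)
    (heT : e ⊆ T) : T ∈ D.N :=
  (hB.2 he).2 T hT heT

lemma mem_iff_mem_N (hB : IsSepBlock D B) {T e₀ e : Finset I} (hT : T ∈ level H 3)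
    (he₀ : e₀ ∈ B) (he₀T : e₀ ⊆ T) (heT : e ⊆ T) (he : e.card = 2) :
    e ∈ B ↔ e ∈ D.N := by
  refine ⟨fun h => (hB.1.2.1 h).1, fun heN => ?_⟩
  have he2 : e ∈ level H 2 := ⟨D.N_sub heN, he⟩
  have he₀2 : e₀ ∈ level H 2 := (hB.1.2.1 he₀).2
  obtain rfl | hne := eq_or_ne e₀ e
  · exact he₀
  have hunion : e₀ ∪ e = T := by
    refine Finset.eq_of_subset_of_card_le (Finset.union_subset he₀T heT) ?_
    by_contra! hlt
    rw [hT.2] at hlt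
    have h₀ := Finset.eq_of_subset_of_card_le (Finset.subset_union_left (s₂ := e))
      (by rw [he₀2.2]; omega)
    have h₁ := Finset.eq_of_subset_of_card_le (Finset.subset_union_right (s₁ := e₀))
      (by rw [he]; omega)
    exact hne (h₀.trans h₁.symm)
  exact hB.1.mem_of_isKPath_pair he₀ ⟨heN, he2⟩
    (isKPath_cons_cons.mpr ⟨he₀2, hunion ▸ hT, isKPath_singleton.mpr he2⟩)

lemma pair_mem_iff (hB : IsSepBlock D B) {T e₀ : Finset I} (hT : T ∈ level H 3)
    (he₀ : e₀ ∈ B) (he₀T : e₀ ⊆ T) {u v : I} (hu : u ∈ T) (hv : v ∈ T) :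
    ({u, v} : Finset I) ∈ B ↔ (u ∈ D.plus T ↔ v ∉ D.plus T) := by
  obtain rfl | huv := eq_or_ne u v
  · have : ({u} : Finset I) ∉ B := fun h => by simpa using (hB.1.2.1 h).2.2
    simp only [Finset.insert_eq_of_mem (Finset.mem_singleton_self u), this, false_iff]
    tauto
  rw [hB.mem_iff_mem_N hT he₀ he₀T (Finset.pair_subset hu hv) (Finset.card_pair huv),
    D.pair_mem_iff (hB.mem_N_of_subset he₀ hT.1 he₀T) hu hv]

lemma even_triangle (hB : IsSepBlock D B) {i₁ i₂ i₃ : I}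
    (hp : IsKPath H 2 [{i₁, i₃}, {i₃, i₂}]) :
    Even ((if ({i₁, i₂} : Finset I) ∈ B then 1 else 0) +
      ((if ({i₁, i₃} : Finset I) ∈ B then 1 else 0) +
        (if ({i₃, i₂} : Finset I) ∈ B then 1 else 0))) := by
  set T : Finset I := {i₁, i₃} ∪ {i₃, i₂}
  have hT : T ∈ level H 3 := (isKPath_cons_cons.mp hp).2.1
  have h₁ : i₁ ∈ T := by simp [T]
  have h₂ : i₂ ∈ T := by simp [T]
  have h₃ : i₃ ∈ T := by simp [T]
  by_cases hc : ∃ e₀ ∈ B, e₀ ⊆ T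
  · obtain ⟨e₀, he₀, he₀T⟩ := hc
    simp only [hB.pair_mem_iff hT he₀ he₀T h₁ h₂, hB.pair_mem_iff hT he₀ he₀T h₁ h₃,
      hB.pair_mem_iff hT he₀ he₀T h₃ h₂]
    by_cases p₁ : i₁ ∈ D.plus T <;> by_cases p₂ : i₂ ∈ D.plus T <;>
      by_cases p₃ : i₃ ∈ D.plus T <;> simp [p₁, p₂, p₃]
  · have hnot : ∀ {u v : I}, u ∈ T → v ∈ T → ({u, v} : Finset I) ∉ B := fun hu hv h =>
      hc ⟨_, h, Finset.pair_subset hu hv⟩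
    simp [hnot h₁ h₂, hnot h₁ h₃, hnot h₃ h₂]

lemma even_kappa_iff_of_elemPairCore (hB : IsSepBlock D B) {ε ε' : List (Finset I)}
    (h : ElemPairCore H ε ε') (δ ρ : List (Finset I)) :
    Even (kappa B (δ ++ ε ++ ρ)) ↔ Even (kappa B (δ ++ ε' ++ ρ)) := by
  rcases h with rfl | ⟨i₁, i₂, rfl, rfl⟩ | ⟨i₁, i₂, i₃, rfl, rfl, hp⟩
  · rfl
  · simp only [List.append_assoc, List.cons_append, List.nil_append]
    rw [kappa_append_cons δ ({i₂} :: {i₁} :: ρ), kappa_append_cons δ ρ, kappa_cons_cons,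
      kappa_cons_cons, Finset.union_comm {i₂}]
    simp only [Nat.even_add]
    tauto
  · have htri := hB.even_triangle hp
    simp only [List.append_assoc, List.cons_append, List.nil_append]
    rw [kappa_append_cons δ ({i₂} :: ρ), kappa_append_cons δ ({i₃} :: {i₂} :: ρ),
      kappa_cons_cons, kappa_cons_cons, kappa_cons_cons]
    simp only [← Finset.insert_eq]
    simp only [Nat.even_add] at htri ⊢
    tauto

lemma even_kappa_iff_of_elemHomotopy (hB : IsSepBlock D B) {γ₁ γ₂ : List (Finset I)}
    (h : ElemHomotopy H γ₁ γ₂) : Even (kappa B γ₁) ↔ Even (kappa B γ₂) := by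
  obtain ⟨δ, ε₁, ε₂, ρ, hpair | hpair, rfl, rfl⟩ := h
  · exact hB.even_kappa_iff_of_elemPairCore hpair δ ρ
  · exact (hB.even_kappa_iff_of_elemPairCore hpair δ ρ).symm

lemma even_kappa_iff_of_homotopicIn (hB : IsSepBlock D B) {A : Set (Finset I)}
    {γ γ' : List (Finset I)} (h : HomotopicIn H A γ γ') :
    Even (kappa B γ) ↔ Even (kappa B γ') := by
  obtain ⟨-, hchain⟩ := h
  induction hchain with
  | refl => rfl
  | tail _ hstep ih => exact ih.trans (hB.even_kappa_iff_of_elemHomotopy hstep.1)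

end IsSepBlock

def KappaJoined (H B : Set (Finset I)) (n : ℕ) (X Y : Finset I) : Prop :=
  ∃ γ, IsKPath H 1 γ ∧ Joins γ X Y ∧ kappa B γ = n

namespace KappaJoined

variable {B : Set (Finset I)} {m n : ℕ} {X Y Z : Finset I}

lemma refl (hX : X ∈ level H 1) : KappaJoined H B 0 X X :=
  ⟨[X], isKPath_singleton.mpr hX, ⟨rfl, rfl⟩, kappa_singleton X⟩

lemma trans (h₁ : KappaJoined H B m X Y) (h₂ : KappaJoined H B n Y Z) :
    KappaJoined H B (m + n) X Z := by
  obtain ⟨p, hp, hpj, rfl⟩ := h₁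
  obtain ⟨q, hq, hqj, rfl⟩ := h₂
  obtain ⟨r, hr, hrj, -, hκ⟩ := exists_isKPath_concat hp hpj hq hqj
  exact ⟨r, hr, hrj, hκ⟩

lemma mem_level_left (h : KappaJoined H B n X Y) : X ∈ level H 1 := by
  obtain ⟨γ, hγ, hj, -⟩ := h
  exact hγ.2.1 X (List.mem_of_mem_head? hj.1)

lemma mem_level_right (h : KappaJoined H B n X Y) : Y ∈ level H 1 := by
  obtain ⟨γ, hγ, hj, -⟩ := h
  exact hγ.2.1 Y (List.mem_of_getLast? hj.2)

lemma even_iff {D : NodalDatum H} (hsc : SimplyConnected H) (hB : IsSepBlock D B)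
    (h₁ : KappaJoined H B m X Y) (h₂ : KappaJoined H B n X Y) : Even m ↔ Even n := by
  obtain ⟨γ, hγ, hj, rfl⟩ := h₁
  obtain ⟨γ', hγ', hj', rfl⟩ := h₂
  exact hB.even_kappa_iff_of_homotopicIn
    (hsc.2 γ γ' hγ hγ' hγ.2.1 hγ'.2.1 (hj.1.trans hj'.1.symm) (hj.2.trans hj'.2.symm))

end KappaJoined

section Crossings

variable {B : Set (Finset I)} {γ : List (Finset I)} {X Y : Finset I}

lemma kappaJoined_zero_of_pair_notMem (hH : IsCSS H) {a d : I}
    (had : ({a, d} : Finset I) ∈ H) (hadB : ({a, d} : Finset I) ∉ B) :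
    KappaJoined H B 0 {a} {d} := by
  have hsingle : ∀ b : I, ({b} : Finset I) ∈ level H 1 := fun b =>
    ⟨hH.2 b, Finset.card_singleton b⟩
  obtain rfl | hne := eq_or_ne a d
  · exact KappaJoined.refl (hsingle a)
  have hun : ({a} ∪ {d} : Finset I) = {a, d} := (Finset.insert_eq a {d}).symm
  refine ⟨[{a}, {d}], isKPath_cons_cons.mpr ⟨hsingle a, hun ▸ ⟨had, Finset.card_pair hne⟩,
    isKPath_singleton.mpr (hsingle d)⟩, ⟨rfl, rfl⟩, ?_⟩
  rw [kappa_cons_cons, hun, if_neg hadB, kappa_singleton]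

lemma exists_first_crossing (hγ : IsKPath H 1 γ) (hj : Joins γ X Y) (hκ : kappa B γ ≠ 0) :
    ∃ u v, u ∪ v ∈ B ∧ KappaJoined H B 0 X u := by
  induction γ generalizing X with
  | nil => exact absurd rfl hγ.1
  | cons x l ih =>
    cases l with
    | nil => exact absurd (kappa_singleton x) hκ
    | cons y l =>
      obtain ⟨hx, hxy, hl⟩ := isKPath_cons_cons.mp hγ
      obtain ⟨rfl, hlj⟩ := joins_cons_cons.mp hj
      by_cases hcross : x ∪ y ∈ B
      · exact ⟨x, y, hcross, KappaJoined.refl hx⟩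
      rw [kappa_cons_cons, if_neg hcross, Nat.zero_add] at hκ
      obtain ⟨u, v, huv, hyu⟩ := ih hl hlj hκ
      have hxy' : KappaJoined H B 0 x y :=
        ⟨[x, y], isKPath_cons_cons.mpr ⟨hx, hxy, isKPath_singleton.mpr hyu.mem_level_left⟩,
          ⟨rfl, rfl⟩, by rw [kappa_cons_cons, if_neg hcross, kappa_singleton]⟩
      exact ⟨u, v, huv, hxy'.trans hyu⟩

lemma exists_last_crossing (hγ : IsKPath H 1 γ) (hj : Joins γ X Y) (hκ : kappa B γ ≠ 0) :
    ∃ u v, u ∪ v ∈ B ∧ KappaJoined H B 1 u Y ∧ KappaJoined H B 0 v Y := by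
  induction γ generalizing X with
  | nil => exact absurd rfl hγ.1
  | cons x l ih =>
    cases l with
    | nil => exact absurd (kappa_singleton x) hκ
    | cons y l =>
      obtain ⟨-, -, hl⟩ := isKPath_cons_cons.mp hγ
      obtain ⟨rfl, hlj⟩ := joins_cons_cons.mp hj
      by_cases htail : kappa B (y :: l) = 0
      · have hcross : x ∪ y ∈ B := by
          by_contra h
          rw [kappa_cons_cons, if_neg h, htail] at hκ
          exact hκ rfl
        exact ⟨x, y, hcross, ⟨_, hγ, hj, by rw [kappa_cons_cons, if_pos hcross, htail]⟩,
          ⟨_, hl, hlj, htail⟩⟩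
      · exact ih hl hlj htail

end Crossings

namespace IsSepBlock

variable {D : NodalDatum H} {B : Set (Finset I)}

lemma exists_kappaJoined_step (hH : IsCSS H) (hB : IsSepBlock D B) {e e' : Finset I}
    (he : e ∈ B) (he' : e' ∈ D.N) (hT : e ∪ e' ∈ H) {a : I} (ha : a ∈ e) :
    ∃ d ∈ e', KappaJoined H B 0 {a} {d} := by
  set T := e ∪ e'
  have hTN : T ∈ D.N := hB.mem_N_of_subset he hT Finset.subset_union_left
  have haT : a ∈ T := Finset.mem_union_left _ ha
  obtain ⟨d, hde', hside⟩ : ∃ d ∈ e', (a ∈ D.plus T ↔ d ∈ D.plus T) := by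
    obtain ⟨⟨p, hp⟩, ⟨q, hq⟩⟩ := (D.mem_iff T hTN e' Finset.subset_union_right).mp he'
    rw [Finset.mem_inter] at hp hq
    have hqP := (D.mem_minus_iff hTN (Finset.mem_union_right _ hq.1)).mp hq.2
    by_cases haP : a ∈ D.plus T
    · exact ⟨p, hp.1, iff_of_true haP hp.2⟩
    · exact ⟨q, hq.1, iff_of_false haP hqP⟩
  have hdT : d ∈ T := Finset.mem_union_right _ hde'
  refine ⟨d, hde', kappaJoined_zero_of_pair_notMem hH
    (hH.1 T hT _ (Finset.pair_subset haT hdT)) fun had => ?_⟩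
  have := (D.pair_mem_iff hTN haT hdT).mp (hB.1.2.1 had).1
  tauto

lemma exists_kappaJoined_of_isKPath (hH : IsCSS H) (hB : IsSepBlock D B)
    {es : List (Finset I)} {e e' : Finset I} (hes : IsKPath H 2 es) (hj : Joins es e e')
    (hesB : ∀ K ∈ es, K ∈ B) {a : I} (ha : a ∈ e) :
    ∃ c ∈ e', KappaJoined H B 0 {a} {c} := by
  induction es generalizing e a with
  | nil => exact absurd rfl hes.1
  | cons x l ih =>
    cases l with
    | nil =>
      obtain ⟨rfl, rfl⟩ := joins_singleton.mp hj
      exact ⟨a, ha, KappaJoined.refl ⟨hH.2 a, Finset.card_singleton a⟩⟩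
    | cons y l =>
      obtain ⟨-, hxy, hl⟩ := isKPath_cons_cons.mp hes
      obtain ⟨rfl, hlj⟩ := joins_cons_cons.mp hj
      obtain ⟨d, hd, had⟩ := hB.exists_kappaJoined_step hH (hesB x List.mem_cons_self)
        (hB.1.2.1 (hesB y (by simp))).1 hxy.1 ha
      obtain ⟨c, hc, hdc⟩ := ih hl hlj (fun K hK => hesB K (List.mem_cons_of_mem x hK)) hd
      exact ⟨c, hc, had.trans hdc⟩

end IsSepBlock

lemma KappaJoined.zero_or_one {D : NodalDatum H} {B : Set (Finset I)} {n : ℕ}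
    {X Y : Finset I} (hH : IsCSS H) (hB : IsSepBlock D B) (h : KappaJoined H B n X Y)
    (hn : n ≠ 0) : KappaJoined H B 0 X Y ∨ KappaJoined H B 1 X Y := by
  obtain ⟨γ, hγ, hj, rfl⟩ := h
  obtain ⟨u, v, huv, hXu⟩ := exists_first_crossing hγ hj hn
  obtain ⟨u', v', huv', hu'Y, hv'Y⟩ := exists_last_crossing hγ hj hn
  obtain ⟨a, rfl⟩ := Finset.card_eq_one.mp hXu.mem_level_right.2
  obtain ⟨es, hes, hjes, hesB⟩ := hB.1.2.2.1 _ huv _ huv'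
  obtain ⟨c, hc, hac⟩ := hB.exists_kappaJoined_of_isKPath hH hes hjes hesB
    (Finset.mem_union_left v (Finset.mem_singleton_self a))
  rcases Finset.mem_union.mp hc with hc | hc
  · obtain ⟨b, rfl⟩ := Finset.card_eq_one.mp hu'Y.mem_level_left.2
    obtain rfl := Finset.mem_singleton.mp hc
    exact Or.inr ((hXu.trans hac).trans hu'Y)
  · obtain ⟨b, rfl⟩ := Finset.card_eq_one.mp hv'Y.mem_level_left.2
    obtain rfl := Finset.mem_singleton.mp hc
    exact Or.inl ((hXu.trans hac).trans hv'Y)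

end

theorem ABset_joined_without_crossing_general
    {I : Type*} [DecidableEq I] (H : Set (Finset I))
    (hH : IsCSS H) (hsc : SimplyConnected H)
    (D : NodalDatum H) (B : Set (Finset I)) (hB : IsSepBlock D B) :
    ∀ (i j : I), ({j} : Finset I) ∈ ABset H B i →
      ∃ γ : List (Finset I), IsKPath H 1 γ ∧
        Joins γ ({i} : Finset I) ({j} : Finset I) ∧ kappa B γ = 0 := by
  rintro i j ⟨-, γ, hγ, hj, heven⟩
  have hjoined : KappaJoined H B (kappa B γ) {i} {j} := ⟨γ, hγ, hj, rfl⟩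
  obtain h0 | hne := eq_or_ne (kappa B γ) 0
  · exact ⟨γ, hγ, hj, h0⟩
  obtain h | h := hjoined.zero_or_one hH hB hne
  · exact h
  · exact absurd ((hjoined.even_iff hsc hB h).mp heven) Nat.not_even_one

/-- For a nodal separating block `B` of a simply connected combinatorial
strata structure: for every `i ∈ I` and every `{j} ∈ A_B(i)`, there is a 1-path `γ` in
`H` joining `{i}` and `{j}` with `κ_B(γ) = 0`. -/
theorem ABset_joined_without_crossing
    {I : Type*} [Fintype I] [DecidableEq I] (H : Set (Finset I))
    (hH : IsCSS H) (hsc : SimplyConnected H)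
    (D : NodalDatum H) (B : Set (Finset I)) (hB : IsSepBlock D B) :
    ∀ (i j : I), ({j} : Finset I) ∈ ABset H B i →
      ∃ γ : List (Finset I), IsKPath H 1 γ ∧
        Joins γ ({i} : Finset I) ({j} : Finset I) ∧ kappa B γ = 0 :=
  ABset_joined_without_crossing_general H hH hsc D B hB
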